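/- arXiv:2206.03097 — 3 statements merged into one kernel-verified Lean document; each statement's English description precedes it below -/
import Mathlib

section
/- Let s ∈ Σⁿ. If the d₁-neighborhood N_n^{d₁}(s) = {t ∈ Σⁿ : edit(s,t) ≤ d₁} contains a subset X of size x whose elements have pairwise edit distance at least d₂, then for any (d₁,d₂)-sensitive bucketing function f we have |f(s)| ≥ x. -/
/-- Cost structure for the Levenshtein distance (as in the removed `Mathlib.Data.List.EditDistance`). -/
structure Levenshtein.Cost (α β δ : Type*) where
  delete : α → δ
  insert : β → δ
  substitute : α → β → δ

/-- The default cost: insertions and deletions cost 1, substitutions cost 0 or 1. -/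
def Levenshtein.defaultCost {α : Type*} [DecidableEq α] : Levenshtein.Cost α α ℕ where
  delete _ := 1
  insert _ := 1
  substitute a b := if a = b then 0 else 1

/-- Levenshtein distance, by its defining recursion (the removed Mathlib `levenshtein`). -/
def levenshtein {α β δ : Type*} [AddZeroClass δ] [Min δ] (C : Levenshtein.Cost α β δ) :
    List α → List β → δ
  | [], [] => 0
  | [], y :: ys => C.insert y + levenshtein C [] ys
  | x :: xs, [] => C.delete x + levenshtein C xs []
  | x :: xs, y :: ys =>
    min (C.delete x + levenshtein C xs (y :: ys))
      (min (C.insert y + levenshtein C (x :: xs) ys) (C.substitute x y + levenshtein C xs ys))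

/-- Edit (Levenshtein) distance between two length-`n` sequences over `α`. -/
def editDist {α : Type*} [DecidableEq α] {n : ℕ} (s t : Fin n → α) : ℕ :=
  levenshtein Levenshtein.defaultCost (List.ofFn s) (List.ofFn t)

/-- `f` is a `(d₁, d₂)`-sensitive bucketing function. -/
def IsSensitive {α B : Type*} [DecidableEq α] {n : ℕ} (d₁ d₂ : ℕ)
    (f : (Fin n → α) → Set B) : Prop :=
  (∀ s t : Fin n → α, editDist s t ≤ d₁ → (f s ∩ f t).Nonempty) ∧
  (∀ s t : Fin n → α, d₂ ≤ editDist s t → f s ∩ f t = ∅)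

theorem Finset.exists_subset_card_le_of_pairwiseDisjoint {ι B : Type*} (X : Finset ι)
    (S : Set B) (F : ι → Set B) (hmeet : ∀ i ∈ X, (S ∩ F i).Nonempty)
    (hdisj : (X : Set ι).PairwiseDisjoint F) :
    ∃ Y : Finset B, ↑Y ⊆ S ∧ X.card ≤ Y.card := by
  classical
  choose g hgS hgF using fun i : X => hmeet i i.2
  refine ⟨X.attach.image g, ?_, ?_⟩
  · intro b hb
    obtain ⟨i, -, rfl⟩ := Finset.mem_image.1 hb
    exact hgS i
  · rw [Finset.card_image_of_injective _ ?_, Finset.card_attach]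
    intro i j hij
    by_contra hne
    exact Set.disjoint_left.1 (hdisj i.2 j.2 (Subtype.coe_ne_coe.2 hne)) (hgF i) (hij ▸ hgF j)

theorem IsSensitive.pairwiseDisjoint {α B : Type*} [DecidableEq α] {n d₁ d₂ : ℕ}
    {f : (Fin n → α) → Set B} (hf : IsSensitive d₁ d₂ f) {X : Set (Fin n → α)}
    (hpair : ∀ t ∈ X, ∀ u ∈ X, t ≠ u → d₂ ≤ editDist t u) :
    X.PairwiseDisjoint f :=
  fun t ht u hu hne => Set.disjoint_iff_inter_eq_empty.2 (hf.2 t u (hpair t ht u hu hne))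

theorem stmt1_general {α B : Type*} [DecidableEq α]
    {n d₁ d₂ : ℕ} (s : Fin n → α) (X : Finset (Fin n → α))
    (hX : ∀ t ∈ X, editDist s t ≤ d₁)
    (hpair : ∀ t ∈ X, ∀ u ∈ X, t ≠ u → d₂ ≤ editDist t u)
    (f : (Fin n → α) → Set B) (hf : IsSensitive d₁ d₂ f) :
    ∃ Y : Finset B, ↑Y ⊆ f s ∧ X.card ≤ Y.card :=
  X.exists_subset_card_le_of_pairwiseDisjoint (f s) f (fun t ht => hf.1 s t (hX t ht))
    (hf.pairwiseDisjoint hpair)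

theorem stmt1 {α B : Type*} [Fintype α] [DecidableEq α] (hα : 1 < Fintype.card α)
    {n d₁ d₂ : ℕ} (hd : d₁ < d₂) (s : Fin n → α) (X : Finset (Fin n → α))
    (hX : ∀ t ∈ X, editDist s t ≤ d₁)
    (hpair : ∀ t ∈ X, ∀ u ∈ X, t ≠ u → d₂ ≤ editDist t u)
    (f : (Fin n → α) → Set B) (hf : IsSensitive d₁ d₂ f) :
    ∃ Y : Finset B, ↑Y ⊆ f s ∧ X.card ≤ Y.card :=
  stmt1_general s X hX hpair f hf
end

section
/- If f : Σⁿ → P(B) is a (1,2)-sensitive bucketing function, then |f(s)| ≥ n for every sequence s ∈ Σⁿ. -/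
section EditDistance

variable {α : Type*} [DecidableEq α] {n : ℕ}

@[simp] lemma Levenshtein.defaultCost_delete (a : α) :
    (Levenshtein.defaultCost : Levenshtein.Cost α α ℕ).delete a = 1 := rfl

@[simp] lemma Levenshtein.defaultCost_insert (a : α) :
    (Levenshtein.defaultCost : Levenshtein.Cost α α ℕ).insert a = 1 := rfl

@[simp] lemma Levenshtein.defaultCost_substitute (a b : α) :
    (Levenshtein.defaultCost : Levenshtein.Cost α α ℕ).substitute a b = if a = b then 0 else 1 :=
  rfl

lemma eq_of_levenshtein_defaultCost_eq_zero {x y : List α}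
    (h : levenshtein Levenshtein.defaultCost x y = 0) : x = y := by
  induction x generalizing y with
  | nil => cases y <;> simp_all [levenshtein]
  | cons a xs ih =>
    cases y with
    | nil => simp [levenshtein] at h
    | cons b ys =>
      simp only [levenshtein, Levenshtein.defaultCost_delete, Levenshtein.defaultCost_insert,
        Levenshtein.defaultCost_substitute, Nat.min_eq_zero_iff, Nat.add_eq_zero_iff,
        ite_eq_left_iff] at h
      rcases h with ⟨h, -⟩ | ⟨h, -⟩ | ⟨hab, h⟩
      · omega
      · omega
      · rw [not_imp_comm.1 hab one_ne_zero, ih h]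

lemma hammingDist_fin_succ (s t : Fin (n + 1) → α) :
    hammingDist s t = (if s 0 = t 0 then 0 else 1) + hammingDist (Fin.tail s) (Fin.tail t) := by
  rw [hammingDist, hammingDist, Finset.card_filter, Finset.card_filter, Fin.sum_univ_succ]
  congr 1
  by_cases h : s 0 = t 0 <;> simp [h]

lemma editDist_le_hammingDist (s t : Fin n → α) : editDist s t ≤ hammingDist s t := by
  induction n with
  | zero => simp [editDist, levenshtein]
  | succ n ih =>
    calc editDist s t
        ≤ (if s 0 = t 0 then 0 else 1) + editDist (Fin.tail s) (Fin.tail t) := by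
          simp only [editDist, List.ofFn_succ, levenshtein]
          exact (min_le_right _ _).trans (min_le_right _ _)
      _ ≤ hammingDist s t := by
          rw [hammingDist_fin_succ]
          exact Nat.add_le_add_left (ih _ _) _

lemma hammingDist_le_one_of_editDist_le_one {s t : Fin n → α}
    (h : editDist s t ≤ 1) : hammingDist s t ≤ 1 := by
  induction n with
  | zero => simp [hammingDist]
  | succ n ih =>
    have eq_of_le : ∀ {x y : List α}, 1 + levenshtein Levenshtein.defaultCost x y ≤ 1 → x = y :=
      fun h => eq_of_levenshtein_defaultCost_eq_zero (by omega)
    simp only [editDist, List.ofFn_succ, levenshtein, Levenshtein.defaultCost_delete,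
      Levenshtein.defaultCost_insert, Levenshtein.defaultCost_substitute, min_le_iff] at h
    rw [hammingDist_fin_succ]
    -- a deletion or an insertion alone would change the length
    rcases h with h | h | h
    · simpa using congrArg List.length (eq_of_le h)
    · simpa using congrArg List.length (eq_of_le h)
    · split_ifs at h ⊢
      · rw [zero_add] at h ⊢
        exact ih h
      · rw [show Fin.tail s = Fin.tail t from List.ofFn_injective (eq_of_le h), hammingDist_self]

end EditDistance

section Hamming

variable {ι β : Type*} [Fintype ι] [DecidableEq ι] [DecidableEq β]

lemma hammingDist_update_le_one (x : ι → β) (i : ι) (a : β) :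
    hammingDist x (Function.update x i a) ≤ 1 := by
  refine (Finset.card_le_card fun k hk => Finset.mem_singleton.2 ?_).trans
    (Finset.card_singleton i).le
  by_contra hki
  exact (Finset.mem_filter.1 hk).2 (Function.update_of_ne hki a x).symm

lemma two_le_hammingDist_update_update (x : ι → β) {i j : ι} (hij : i ≠ j) {a b : β}
    (ha : a ≠ x i) (hb : b ≠ x j) :
    2 ≤ hammingDist (Function.update x i a) (Function.update x j b) := by
  refine (Finset.card_pair hij).symm.le.trans (Finset.card_le_card fun k hk => ?_)
  rw [Finset.mem_filter]
  rcases Finset.mem_insert.1 hk with rfl | hk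
  · simpa [Function.update_of_ne hij] using ha
  · rw [Finset.mem_singleton.1 hk]
    simpa [Function.update_of_ne hij.symm] using hb.symm

end Hamming

section Substitution

variable {α : Type*} [DecidableEq α] {n : ℕ}

lemma editDist_update_le_one (s : Fin n → α) (i : Fin n) (a : α) :
    editDist s (Function.update s i a) ≤ 1 :=
  (editDist_le_hammingDist _ _).trans (hammingDist_update_le_one s i a)

lemma two_le_editDist_update_update (s : Fin n → α) {i j : Fin n} (hij : i ≠ j) {a b : α}
    (ha : a ≠ s i) (hb : b ≠ s j) :
    2 ≤ editDist (Function.update s i a) (Function.update s j b) := by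
  by_contra! h
  have := hammingDist_le_one_of_editDist_le_one (Nat.le_of_lt_succ h)
  have := two_le_hammingDist_update_update s hij ha hb
  omega

end Substitution

open Function in
lemma exists_finset_subset_card_le_of_pairwise_disjoint {ι B : Type*} [Fintype ι] {S : Set B}
    {g : ι → Set B} (hmeet : ∀ i, (S ∩ g i).Nonempty) (hdisj : Pairwise (Disjoint on g)) :
    ∃ Y : Finset B, ↑Y ⊆ S ∧ Fintype.card ι ≤ Y.card := by
  classical
  choose b hb using hmeet
  have hinj : Function.Injective b := fun i j hij => by_contra fun hne =>
    Set.disjoint_left.1 (hdisj hne) (hb i).2 (hij ▸ (hb j).2)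
  refine ⟨Finset.univ.image b, ?_, ?_⟩
  · simpa [Set.range_subset_iff] using fun i => (hb i).1
  · rw [Finset.card_image_of_injective _ hinj, Finset.card_univ]

theorem stmt3 {α B : Type*} [Fintype α] [DecidableEq α] (hα : 1 < Fintype.card α)
    {n : ℕ} (f : (Fin n → α) → Set B) (hf : IsSensitive 1 2 f) :
    ∀ s : Fin n → α, ∃ Y : Finset B, ↑Y ⊆ f s ∧ n ≤ Y.card := by
  intro s
  choose a ha using fun i => Fintype.exists_ne_of_one_lt_card hα (s i)
  obtain ⟨Y, hYs, hYcard⟩ := exists_finset_subset_card_le_of_pairwise_disjoint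
    (g := fun i => f (Function.update s i (a i)))
    (fun i => hf.1 _ _ (editDist_update_le_one s i (a i)))
    (fun i j hij => Set.disjoint_iff_inter_eq_empty.2
      (hf.2 _ _ (two_le_editDist_update_update s hij (ha i) (ha j))))
  exact ⟨Y, hYs, by simpa using hYcard⟩
end

section
/- If r is odd, then for any two sequences s, t ∈ Σⁿ with edit(s,t) ≤ 2r−1, there exists a sequence v ∈ Σⁿ with edit(s,v) ≤ r−1 and edit(t,v) ≤ r. -/
/-!
An optimal alignment of `s` with `t` consists of `m` deletion–insertion pairs, `c` substitutions
and `||s| - |t||` unpaired indels, so `edit(s,t) = 2m + c + ||s| - |t||`. Carrying out any `a`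
pairs and `b` substitutions of it (and no unpaired indel) gives a string `v` of length `|s|` with
`edit(s,v) ≤ 2a + b` and `edit(t,v) ≤ 2(m - a) + (c - b)`; this is proved by induction along the
recursion defining the distance. For `|s| = |t|` and `2m + c ≤ 2r - 1` one can choose `a, b` with
`2a + b ≤ r - 1` and `2(m - a) + (c - b) ≤ r`: the interval `[2m + c - r, r - 1]` is nonempty,
contains an even number unless it is a single point, and in that case `2m + c = 2r - 1` is odd, so
`c ≥ 1` supplies the odd parity.
-/

theorem exists_split_of_two_mul_add_le {m c r : ℕ} (h : 2 * m + c ≤ 2 * r - 1) :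
    ∃ a ≤ m, ∃ b ≤ c, 2 * a + b ≤ r - 1 ∧ 2 * (m - a) + (c - b) ≤ r := by
  rcases le_or_gt (2 * m + c) r with hr | hr
  · exact ⟨0, by omega, 0, by omega, by omega, by omega⟩
  rcases le_or_gt (2 * m + c - r) c with hk | hk
  · exact ⟨0, by omega, 2 * m + c - r, hk, by omega, by omega⟩
  rcases Nat.eq_zero_or_pos c with rfl | hc
  · exact ⟨(2 * m - r + 1) / 2, by omega, 0, le_rfl, by omega, by omega⟩
  · exact ⟨(2 * m + c - r) / 2, by omega, (2 * m + c - r) % 2, by omega, by omega, by omega⟩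

namespace Levenshtein

section Unfolding

variable {α β δ : Type*} [AddZeroClass δ] [Min δ] (C : Cost α β δ)

@[simp] theorem levenshtein_nil_nil : levenshtein C [] [] = 0 := by rw [levenshtein]

@[simp] theorem levenshtein_nil_cons (y : β) (ys : List β) :
    levenshtein C [] (y :: ys) = C.insert y + levenshtein C [] ys := by rw [levenshtein]

@[simp] theorem levenshtein_cons_nil (x : α) (xs : List α) :
    levenshtein C (x :: xs) [] = C.delete x + levenshtein C xs [] := by rw [levenshtein]

theorem levenshtein_cons_cons (x : α) (xs : List α) (y : β) (ys : List β) :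
    levenshtein C (x :: xs) (y :: ys) =
      min (C.delete x + levenshtein C xs (y :: ys))
        (min (C.insert y + levenshtein C (x :: xs) ys)
          (C.substitute x y + levenshtein C xs ys)) := by
  rw [levenshtein]

end Unfolding

section Steps

variable {α β δ : Type*} [AddZeroClass δ] [LinearOrder δ] (C : Cost α β δ)

theorem levenshtein_cons_left_le (x : α) (xs : List α) (ys : List β) :
    levenshtein C (x :: xs) ys ≤ C.delete x + levenshtein C xs ys := by
  cases ys with
  | nil => simp
  | cons y ys => rw [levenshtein_cons_cons]; exact min_le_left _ _

theorem levenshtein_cons_right_le (xs : List α) (y : β) (ys : List β) :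
    levenshtein C xs (y :: ys) ≤ C.insert y + levenshtein C xs ys := by
  cases xs with
  | nil => simp
  | cons x xs => rw [levenshtein_cons_cons]; exact (min_le_right _ _).trans (min_le_left _ _)

theorem levenshtein_cons_cons_le (x : α) (xs : List α) (y : β) (ys : List β) :
    levenshtein C (x :: xs) (y :: ys) ≤ C.substitute x y + levenshtein C xs ys := by
  rw [levenshtein_cons_cons]; exact (min_le_right _ _).trans (min_le_right _ _)

end Steps

section UnitCost

variable {α : Type*} [DecidableEq α]

local notation "ld" => levenshtein (defaultCost (α := α))

@[simp] theorem defaultCost_delete_s10 (a : α) : (defaultCost : Cost α α ℕ).delete a = 1 := rfl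

@[simp] theorem defaultCost_insert_s10 (a : α) : (defaultCost : Cost α α ℕ).insert a = 1 := rfl

@[simp] theorem defaultCost_substitute_s10 (a b : α) :
    (defaultCost : Cost α α ℕ).substitute a b = if a = b then 0 else 1 := rfl

@[simp] theorem ld_nil_left (l : List α) : ld [] l = l.length := by
  induction l with
  | nil => simp
  | cons a l ih => simp [ih, add_comm]

@[simp] theorem ld_nil_right (l : List α) : ld l [] = l.length := by
  induction l with
  | nil => simp
  | cons a l ih => simp [ih, add_comm]

theorem ld_cons_left_le (x : α) (xs ys : List α) : ld (x :: xs) ys ≤ 1 + ld xs ys :=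
  levenshtein_cons_left_le _ x xs ys

theorem ld_cons_right_le (xs : List α) (y : α) (ys : List α) :
    ld xs (y :: ys) ≤ 1 + ld xs ys :=
  levenshtein_cons_right_le _ xs y ys

theorem ld_cons_cons_le (x y : α) (xs ys : List α) : ld (x :: xs) (y :: ys) ≤ 1 + ld xs ys :=
  (levenshtein_cons_cons_le _ x xs y ys).trans <| by
    simp only [defaultCost_substitute_s10]; split <;> omega

theorem ld_cons_cons_self_le (x : α) (xs ys : List α) : ld (x :: xs) (x :: ys) ≤ ld xs ys := by
  simpa using levenshtein_cons_cons_le defaultCost x xs x ys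

theorem ld_self (l : List α) : ld l l = 0 := by
  induction l with
  | nil => simp
  | cons a l ih => simpa [ih] using ld_cons_cons_self_le a l l

theorem ld_drop_le (j : ℕ) (l : List α) : ld l (l.drop j) ≤ j := by
  induction j generalizing l with
  | zero => simp [ld_self]
  | succ j ih =>
    cases l with
    | nil => simp
    | cons a l =>
      have := ld_cons_left_le a l (l.drop j)
      have := ih l
      simp only [List.drop_succ_cons]
      omega

theorem ld_cons_cons_eq (x y : α) (xs ys : List α) :
    ld (x :: xs) (y :: ys) = 1 + ld xs (y :: ys) ∨
      ld (x :: xs) (y :: ys) = 1 + ld (x :: xs) ys ∨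
      ld (x :: xs) (y :: ys) = (if x = y then 0 else 1) + ld xs ys := by
  have := levenshtein_cons_cons defaultCost x xs y ys
  simp only [defaultCost_delete_s10, defaultCost_insert_s10, defaultCost_substitute_s10] at this
  omega

/-- `s` is turned into `t` by `m` deletion–insertion pairs, `c` substitutions and
`dist |s| |t|` unpaired indels, in such a way that performing any `a` of the pairs, `b` of the
substitutions and `g` of the unpaired indels yields a string `v` in between. -/
def HasIntermediates (s t : List α) (m c : ℕ) : Prop :=
  ∀ a ≤ m, ∀ b ≤ c, ∀ g ≤ s.length.dist t.length, ∃ v : List α,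
    v.length.dist s.length = g ∧ v.length.dist t.length = s.length.dist t.length - g ∧
    ld s v ≤ 2 * a + b + g ∧ ld t v ≤ 2 * (m - a) + (c - b) + (s.length.dist t.length - g)

namespace HasIntermediates

variable {s t xs ys : List α} {m c : ℕ}

theorem symm (h : HasIntermediates s t m c) : HasIntermediates t s m c := by
  intro a ha b hb g hg
  obtain ⟨v, hvs, hvt, hsv, htv⟩ :=
    h (m - a) (by omega) (c - b) (by omega) (s.length.dist t.length - g)
      (by rw [Nat.dist_comm] at hg; omega)
  refine ⟨v, ?_, ?_, ?_, ?_⟩ <;> simp only [Nat.dist] at * <;> omega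

theorem nil_left (t : List α) : HasIntermediates [] t 0 0 := by
  intro a ha b hb g hg
  refine ⟨t.drop (t.length - g), ?_, ?_, ?_, ?_⟩ <;>
    simp only [Nat.dist, List.length_nil, List.length_drop, ld_nil_left] at * <;>
    have := ld_drop_le (t.length - g) t <;> omega

theorem cons_left_of_le (h : HasIntermediates xs t m c) (x : α) (hl : t.length ≤ xs.length) :
    HasIntermediates (x :: xs) t m c := by
  intro a ha b hb g hg
  unfold HasIntermediates at h
  simp only [Nat.dist, List.length_cons] at *
  cases g with
  | zero =>
    obtain ⟨v, hvs, hvt, hsv, htv⟩ := h a ha b hb 0 (by omega)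
    have := ld_cons_cons_self_le x xs v
    have := ld_cons_right_le t x v
    have : (x :: v).length = v.length + 1 := rfl
    exact ⟨x :: v, by omega, by omega, by omega, by omega⟩
  | succ g =>
    obtain ⟨v, hvs, hvt, hsv, htv⟩ := h a ha b hb g (by omega)
    have := ld_cons_left_le x xs v
    exact ⟨v, by omega, by omega, by omega, by omega⟩

theorem cons_left_of_lt (h : HasIntermediates xs t m c) (x : α) (hl : xs.length < t.length) :
    HasIntermediates (x :: xs) t (m + 1) c := by
  intro a ha b hb g hg
  unfold HasIntermediates at h
  simp only [Nat.dist, List.length_cons] at *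
  rcases Nat.lt_or_ge m a with hma | ham
  · obtain ⟨v, hvs, hvt, hsv, htv⟩ := h m le_rfl b hb (g + 1) (by omega)
    have := ld_cons_left_le x xs v
    exact ⟨v, by omega, by omega, by omega, by omega⟩
  · obtain ⟨v, hvs, hvt, hsv, htv⟩ := h a ham b hb g (by omega)
    have := ld_cons_cons_self_le x xs v
    have := ld_cons_right_le t x v
    have : (x :: v).length = v.length + 1 := rfl
    exact ⟨x :: v, by omega, by omega, by omega, by omega⟩

theorem cons_cons_self (h : HasIntermediates xs ys m c) (x : α) :
    HasIntermediates (x :: xs) (x :: ys) m c := by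
  intro a ha b hb g hg
  unfold HasIntermediates at h
  simp only [Nat.dist, List.length_cons] at *
  obtain ⟨v, hvs, hvt, hsv, htv⟩ := h a ha b hb g (by omega)
  have := ld_cons_cons_self_le x xs v
  have := ld_cons_cons_self_le x ys v
  have : (x :: v).length = v.length + 1 := rfl
  exact ⟨x :: v, by omega, by omega, by omega, by omega⟩

theorem cons_cons (h : HasIntermediates xs ys m c) (x y : α) :
    HasIntermediates (x :: xs) (y :: ys) m (c + 1) := by
  intro a ha b hb g hg
  unfold HasIntermediates at h
  simp only [Nat.dist, List.length_cons] at *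
  rcases Nat.lt_or_ge c b with hcb | hbc
  · obtain ⟨v, hvs, hvt, hsv, htv⟩ := h a ha c le_rfl g (by omega)
    have := ld_cons_cons_le x y xs v
    have := ld_cons_cons_self_le y ys v
    have : (y :: v).length = v.length + 1 := rfl
    exact ⟨y :: v, by omega, by omega, by omega, by omega⟩
  · obtain ⟨v, hvs, hvt, hsv, htv⟩ := h a ha b hbc g (by omega)
    have := ld_cons_cons_self_le x xs v
    have := ld_cons_cons_le y x ys v
    have : (x :: v).length = v.length + 1 := rfl
    exact ⟨x :: v, by omega, by omega, by omega, by omega⟩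

theorem exists_cons_left {x : α} (h : ∃ m c, ld xs t = 2 * m + c + xs.length.dist t.length ∧
      HasIntermediates xs t m c) :
    ∃ m c, 1 + ld xs t = 2 * m + c + (x :: xs).length.dist t.length ∧
      HasIntermediates (x :: xs) t m c := by
  obtain ⟨m, c, hd, hm⟩ := h
  simp only [Nat.dist, List.length_cons] at hd ⊢
  rcases Nat.lt_or_ge xs.length t.length with hl | hl
  · exact ⟨m + 1, c, by omega, hm.cons_left_of_lt x hl⟩
  · exact ⟨m, c, by omega, hm.cons_left_of_le x hl⟩

theorem exists_cons_right {y : α} (h : ∃ m c, ld s ys = 2 * m + c + s.length.dist ys.length ∧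
      HasIntermediates s ys m c) :
    ∃ m c, 1 + ld s ys = 2 * m + c + s.length.dist (y :: ys).length ∧
      HasIntermediates s (y :: ys) m c := by
  obtain ⟨m, c, hd, hm⟩ := h
  simp only [Nat.dist, List.length_cons] at hd ⊢
  rcases Nat.lt_or_ge ys.length s.length with hl | hl
  · exact ⟨m + 1, c, by omega, (hm.symm.cons_left_of_lt y hl).symm⟩
  · exact ⟨m, c, by omega, (hm.symm.cons_left_of_le y hl).symm⟩

end HasIntermediates

theorem exists_hasIntermediates : ∀ s t : List α, ∃ m c,
    ld s t = 2 * m + c + s.length.dist t.length ∧ HasIntermediates s t m c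
  | [], t => ⟨0, 0, by simp [Nat.dist], .nil_left t⟩
  | x :: xs, [] => ⟨0, 0, by simp [Nat.dist, add_comm], (HasIntermediates.nil_left _).symm⟩
  | x :: xs, y :: ys => by
    rcases ld_cons_cons_eq x y xs ys with h | h | h
    · rw [h]; exact HasIntermediates.exists_cons_left (exists_hasIntermediates xs (y :: ys))
    · rw [h]; exact HasIntermediates.exists_cons_right (exists_hasIntermediates (x :: xs) ys)
    · obtain ⟨m, c, hd, hm⟩ := exists_hasIntermediates xs ys
      simp only [Nat.dist, List.length_cons] at hd ⊢
      by_cases hxy : x = y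
      · subst hxy
        exact ⟨m, c, by simp [h, hd], hm.cons_cons_self x⟩
      · exact ⟨m, c + 1, by simp [h, hd, hxy]; omega, hm.cons_cons x y⟩

theorem exists_ld_le_of_length_eq {s t : List α} (hst : s.length = t.length) {r : ℕ}
    (h : ld s t ≤ 2 * r - 1) :
    ∃ v : List α, v.length = s.length ∧ ld s v ≤ r - 1 ∧ ld t v ≤ r := by
  obtain ⟨m, c, hd, hm⟩ := exists_hasIntermediates s t
  have hdist : s.length.dist t.length = 0 := hst ▸ Nat.dist_self _
  obtain ⟨a, ha, b, hb, hsa, hta⟩ :=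
    exists_split_of_two_mul_add_le (show 2 * m + c ≤ 2 * r - 1 by omega)
  obtain ⟨v, hvs, -, hsv, htv⟩ := hm a ha b hb 0 (by omega)
  exact ⟨v, Nat.eq_of_dist_eq_zero hvs, by omega, by omega⟩

end UnitCost

end Levenshtein

theorem stmt10_general {α : Type*} [DecidableEq α]
    {n : ℕ} (r : ℕ) (s t : Fin n → α) (h : editDist s t ≤ 2 * r - 1) :
    ∃ v : Fin n → α, editDist s v ≤ r - 1 ∧ editDist t v ≤ r := by
  obtain ⟨v, hv, hsv, htv⟩ := Levenshtein.exists_ld_le_of_length_eq (by simp) h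
  rw [List.length_ofFn] at hv
  subst hv
  exact ⟨v.get, by rwa [editDist, List.ofFn_get], by rwa [editDist, List.ofFn_get]⟩

theorem stmt10 {α : Type*} [Fintype α] [DecidableEq α] (hα : 1 < Fintype.card α)
    {n : ℕ} (r : ℕ) (hr : Odd r) (s t : Fin n → α) (h : editDist s t ≤ 2 * r - 1) :
    ∃ v : Fin n → α, editDist s v ≤ r - 1 ∧ editDist t v ≤ r :=
  stmt10_general r s t h
end
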